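/- arXiv:2307.04734 — 10 statements merged into one kernel-verified Lean document; each statement's English description precedes it below -/
import Mathlib

section
/- Let n ≥ 1 and let f : Z/nZ → Z/nZ be a quandle endomorphism of the dihedral quandle Z_n^dih. Then f is affine: for every a ∈ Z/nZ, f(a) = (f(1) − f(0))·a + f(0) in Z/nZ. -/
/-- A quandle endomorphism of the dihedral quandle `Z_n^dih`:
a map `f : ZMod n → ZMod n` with `f (2*y - x) = 2 * f y - f x` for all `x y`. -/
def IsDihedralEnd (n : ℕ) (f : ZMod n → ZMod n) : Prop :=
  ∀ x y : ZMod n, f (2 * y - x) = 2 * f y - f x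

/-!
Taking `x = k` and `y = k + 1` in `f (2y - x) = 2 f(y) - f(x)` shows that the integer points
`f k` have constant second difference, so they form an arithmetic progression `f 0 + k (f 1 - f 0)`.
Every element of `ZMod n` is the image of an integer, so this determines `f` everywhere.
-/

section SecondDifference

variable {A : Type*} [AddCommGroup A] {u : ℤ → A}

theorem Int.apply_add_one_sub_apply_of_second_diff
    (h : ∀ k, u (k + 2) - u (k + 1) = u (k + 1) - u k) (k : ℤ) :
    u (k + 1) - u k = u 1 - u 0 := by
  induction k using Int.induction_on with
  | zero => simp
  | succ k ih => rw [← ih, ← h k, add_assoc]; norm_num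
  | pred k ih => rw [← ih, ← h (-k - 1)]; ring_nf

theorem Int.apply_eq_add_zsmul_of_second_diff
    (h : ∀ k, u (k + 2) - u (k + 1) = u (k + 1) - u k) (k : ℤ) :
    u k = u 0 + k • (u 1 - u 0) := by
  have step := Int.apply_add_one_sub_apply_of_second_diff h
  induction k using Int.induction_on with
  | zero => simp
  | succ k ih => rw [add_smul, one_smul, ← add_assoc, ← ih, ← step k]; abel
  | pred k ih =>
    have := step (-k - 1)
    rw [sub_add_cancel] at this
    rw [sub_smul, one_smul, add_sub_assoc', ← ih, ← this]; abel

end SecondDifference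

theorem apply_intCast_eq_of_map_two_mul_sub {R : Type*} [Ring R] {f : R → R}
    (hf : ∀ x y : R, f (2 * y - x) = 2 * f y - f x) (k : ℤ) :
    f k = (f 1 - f 0) * k + f 0 := by
  have hsecond : ∀ j : ℤ,
      f ((j + 2 : ℤ) : R) - f ((j + 1 : ℤ) : R) = f ((j + 1 : ℤ) : R) - f j := by
    intro j
    have := hf j ((j + 1 : ℤ) : R)
    push_cast at this ⊢
    rw [show 2 * ((j : R) + 1) - j = j + 2 by rw [mul_add, mul_one, two_mul]; abel] at this
    rw [this, two_mul]; abel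
  have := Int.apply_eq_add_zsmul_of_second_diff (u := fun j : ℤ => f j) hsecond k
  simp only [Int.cast_zero, Int.cast_one] at this
  rw [this, zsmul_eq_mul', add_comm]

theorem dihedral_end_is_affine_general (n : ℕ) (f : ZMod n → ZMod n)
    (hf : IsDihedralEnd n f) :
    ∀ a : ZMod n, f a = (f 1 - f 0) * a + f 0 := by
  intro a
  obtain ⟨k, rfl⟩ := ZMod.intCast_surjective a
  exact apply_intCast_eq_of_map_two_mul_sub hf k

theorem dihedral_end_is_affine (n : ℕ) (hn : 1 ≤ n) (f : ZMod n → ZMod n)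
    (hf : IsDihedralEnd n f) :
    ∀ a : ZMod n, f a = (f 1 - f 0) * a + f 0 :=
  dihedral_end_is_affine_general n f hf
end

section
/- Let n ≥ 1. For every x, y ∈ Z/nZ there exists a unique quandle endomorphism f of the dihedral quandle Z_n^dih with f(0) = x and f(1) = y, namely the affine map a ↦ (y − x)·a + x; consequently the map f ↦ (f(0), f(1)) is a bijection from the set of quandle endomorphisms of Z_n^dih onto (Z/nZ) × (Z/nZ). -/
section CommRing

variable {R : Type*} [CommRing R]

theorem map_intCast_eq_affine_of_map_two_mul_sub {f : R → R}
    (hf : ∀ x y : R, f (2 * y - x) = 2 * f y - f x) (k : ℤ) :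
    f k = (f 1 - f 0) * k + f 0 := by
  let P : ℤ → Prop := fun k => f k = (f 1 - f 0) * k + f 0
  suffices h : ∀ k : ℤ, P k ∧ P (k + 1) from (h k).1
  intro k
  induction k using Int.induction_on with
  | zero => constructor <;> simp [P]
  | succ i ih =>
    refine ⟨ih.2, ?_⟩
    have hstep : ((i + 1 + 1 : ℤ) : R) = 2 * ((i + 1 : ℤ) : R) - ((i : ℤ) : R) := by push_cast; ring
    show f _ = _
    rw [hstep, hf, ih.1, ih.2]
    push_cast; ring
  | pred i ih =>
    refine ⟨?_, by simpa using ih.1⟩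
    have hstep : ((-i - 1 : ℤ) : R) = 2 * ((-i : ℤ) : R) - ((-i + 1 : ℤ) : R) := by push_cast; ring
    show f _ = _
    rw [hstep, hf, ih.1, ih.2]
    push_cast; ring

end CommRing

theorem isDihedralEnd_affine (n : ℕ) (c d : ZMod n) : IsDihedralEnd n (fun a => c * a + d) := by
  intro x y
  ring

theorem IsDihedralEnd.eq_affine {n : ℕ} {f : ZMod n → ZMod n} (hf : IsDihedralEnd n f) :
    f = fun a => (f 1 - f 0) * a + f 0 := by
  funext a
  obtain ⟨k, rfl⟩ := ZMod.intCast_surjective a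
  exact map_intCast_eq_affine_of_map_two_mul_sub hf k

theorem dihedral_end_unique_affine_general (n : ℕ) :
    (∀ x y : ZMod n, ∀ f : ZMod n → ZMod n,
        (IsDihedralEnd n f ∧ f 0 = x ∧ f 1 = y) ↔ f = fun a => (y - x) * a + x) ∧
    Function.Bijective
      (fun f : {f : ZMod n → ZMod n // IsDihedralEnd n f} => (f.1 0, f.1 1)) := by
  have unique : ∀ x y : ZMod n, ∀ f : ZMod n → ZMod n,
      (IsDihedralEnd n f ∧ f 0 = x ∧ f 1 = y) ↔ f = fun a => (y - x) * a + x := by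
    intro x y f
    constructor
    · rintro ⟨hf, rfl, rfl⟩
      exact hf.eq_affine
    · rintro rfl
      exact ⟨isDihedralEnd_affine n _ _, by simp, by simp⟩
  refine ⟨unique, fun f g hfg => ?_, fun ⟨x, y⟩ => ⟨⟨_, isDihedralEnd_affine n (y - x) x⟩, by simp⟩⟩
  obtain ⟨h0, h1⟩ := Prod.mk.inj hfg
  exact Subtype.ext <| ((unique _ _ f.1).1 ⟨f.2, rfl, rfl⟩).trans
    ((unique _ _ g.1).1 ⟨g.2, h0.symm, h1.symm⟩).symm

theorem dihedral_end_unique_affine (n : ℕ) (hn : 1 ≤ n) :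
    (∀ x y : ZMod n, ∀ f : ZMod n → ZMod n,
        (IsDihedralEnd n f ∧ f 0 = x ∧ f 1 = y) ↔ f = fun a => (y - x) * a + x) ∧
    Function.Bijective
      (fun f : {f : ZMod n → ZMod n // IsDihedralEnd n f} => (f.1 0, f.1 1)) :=
  dihedral_end_unique_affine_general n
end

section
/- Let n ≥ 1. The number of quandle automorphisms of the dihedral quandle Z_n^dih equals n·φ(n), where φ is Euler's totient function. -/
/-- A quandle automorphism of the dihedral quandle `Z_n^dih`. -/
def IsDihedralAut (n : ℕ) (f : ZMod n → ZMod n) : Prop :=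
  IsDihedralEnd n f ∧ Function.Bijective f

lemma end_affine {n : ℕ} [NeZero n] {f : ZMod n → ZMod n} (h : IsDihedralEnd n f) :
    ∀ x : ZMod n, f x = (f 1 - f 0) * x + f 0 := by
  set c : ZMod n := f 1 - f 0 with hc
  have step : ∀ x : ZMod n, f (x + 2) = f x + 2 * c := by
    intro x
    have h0 := h x 0
    have h1 := h (-x) 1
    rw [show (2 : ZMod n) * 0 - x = -x by ring] at h0
    rw [show (2 : ZMod n) * 1 - -x = x + 2 by ring] at h1
    rw [h1, h0, hc]; ring
  have key : ∀ m : ℕ, f (m : ZMod n) = c * m + f 0 ∧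
      f ((m : ZMod n) + 1) = c * ((m : ZMod n) + 1) + f 0 := by
    intro m
    induction m with
    | zero =>
      refine ⟨by simp, ?_⟩
      simp [hc]
    | succ k ih =>
      refine ⟨by push_cast; exact ih.2, ?_⟩
      push_cast
      rw [show (k : ZMod n) + 1 + 1 = (k : ZMod n) + 2 by ring, step, ih.1]
      ring
  intro x
  obtain ⟨m, rfl⟩ := ZMod.natCast_zmod_surjective (n := n) x
  exact (key m).1

theorem card_dihedral_aut (n : ℕ) (hn : 1 ≤ n) :
    Nat.card {f : ZMod n → ZMod n // IsDihedralAut n f} = n * Nat.totient n := by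
  haveI : NeZero n := ⟨Nat.one_le_iff_ne_zero.mp hn⟩
  have hF : Function.Bijective
      (fun p : (ZMod n)ˣ × ZMod n =>
        (⟨fun x => (p.1 : ZMod n) * x + p.2, by
          constructor
          · intro x y; ring
          · constructor
            · intro a b hab
              simp only at hab
              have hmul : (p.1 : ZMod n) * a = (p.1 : ZMod n) * b := by
                linear_combination hab
              exact (Units.mul_right_inj p.1).mp hmul
            · intro y
              refine ⟨(p.1⁻¹ : (ZMod n)ˣ) * (y - p.2), ?_⟩
              simp [← mul_assoc]⟩ :
          {f : ZMod n → ZMod n // IsDihedralAut n f})) := by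
    constructor
    · rintro ⟨a, b⟩ ⟨a', b'⟩ hab
      have h := congrArg Subtype.val hab
      simp only at h
      have h0 := congrFun h 0
      have h1 := congrFun h 1
      simp only [mul_zero, zero_add, mul_one] at h0 h1
      have ha : (a : ZMod n) = (a' : ZMod n) := by
        rw [h0] at h1
        exact add_right_cancel h1
      exact Prod.ext (Units.ext ha) h0
    · rintro ⟨f, hend, hbij⟩
      have haff := end_affine hend
      obtain ⟨x, hx⟩ := hbij.2 (1 + f 0)
      have hx' : (f 1 - f 0) * x = 1 := by
        have := haff x
        rw [this] at hx
        linear_combination hx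
      have hunit : IsUnit (f 1 - f 0) := IsUnit.of_mul_eq_one x hx'
      obtain ⟨u, hu⟩ := hunit
      refine ⟨(u, f 0), ?_⟩
      ext y
      simp only [hu]
      exact (haff y).symm
  have hcard := Nat.card_eq_of_bijective _ hF
  rw [← hcard, Nat.card_prod, Nat.card_eq_fintype_card, Nat.card_eq_fintype_card,
    ZMod.card_units_eq_totient, ZMod.card, Nat.mul_comm]
end

section
/- Let n ≥ 1 and a, b ∈ Z/nZ. The number of quandle endomorphisms f of the dihedral quandle Z_n^dih with f(0) = 0 and f(a) = b equals gcd(a.val, n) if gcd(a.val, n) divides b.val, and equals 0 otherwise, where a.val, b.val ∈ {0, 1, …, n−1} are the natural-number representatives of a and b. -/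
theorem AddMonoidHom.natCard_preimage_singleton_of_mem_range {G H : Type*} [AddGroup G]
    [AddGroup H] (f : G →+ H) {y : H} (hy : y ∈ f.range) :
    Nat.card (f ⁻¹' {y}) = Nat.card f.ker := by
  obtain ⟨x, rfl⟩ := hy
  exact Nat.card_congr (f.fiberEquivKer x)

namespace ZMod

variable {n : ℕ} [NeZero n]

theorem exists_mul_eq_iff_gcd_dvd (a b : ZMod n) :
    (∃ c, c * a = b) ↔ a.val.gcd n ∣ b.val := by
  constructor
  · rintro ⟨c, rfl⟩
    rw [val_mul, Nat.dvd_mod_iff (Nat.gcd_dvd_right _ _)]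
    exact Dvd.dvd.mul_left (Nat.gcd_dvd_left _ _) _
  · rintro ⟨k, hk⟩
    refine ⟨k * a⁻¹, ?_⟩
    rw [mul_assoc, mul_comm a⁻¹, mul_inv_eq_gcd, ← Nat.cast_mul, mul_comm, ← hk, natCast_zmod_val]

theorem natCard_mul_eq (a b : ZMod n) :
    Nat.card {c : ZMod n // c * a = b} = if a.val.gcd n ∣ b.val then a.val.gcd n else 0 := by
  split_ifs with hdvd
  · set φ : ZMod n →+ ZMod n := nsmulAddMonoidHom a.val
    have hφ : ∀ c, φ c = c * a := fun c => by
      rw [nsmulAddMonoidHom_apply, nsmul_eq_mul, natCast_zmod_val, mul_comm]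
    have hb : b ∈ φ.range := by
      obtain ⟨c, hc⟩ := (exists_mul_eq_iff_gcd_dvd a b).2 hdvd
      exact ⟨c, (hφ c).trans hc⟩
    calc Nat.card {c : ZMod n // c * a = b}
        = Nat.card (φ ⁻¹' {b}) := Nat.card_congr (Equiv.subtypeEquivRight fun c => by simp [hφ])
      _ = Nat.card φ.ker := φ.natCard_preimage_singleton_of_mem_range hb
      _ = a.val.gcd n := by
        rw [IsAddCyclic.card_nsmulAddMonoidHom_ker, Nat.card_zmod, Nat.gcd_comm]
  · have : IsEmpty {c : ZMod n // c * a = b} :=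
      ⟨fun ⟨c, hc⟩ => hdvd ((exists_mul_eq_iff_gcd_dvd a b).1 ⟨c, hc⟩)⟩
    exact Nat.card_of_isEmpty

end ZMod

namespace IsDihedralEnd

variable {n : ℕ} {f : ZMod n → ZMod n}

theorem mul_left (c : ZMod n) : IsDihedralEnd n (c * ·) := fun x y => by ring

theorem eq_mul_apply_one [NeZero n] (hf : IsDihedralEnd n f) (h0 : f 0 = 0) (x : ZMod n) :
    f x = f 1 * x := by
  have hnat : ∀ k : ℕ, f k = f 1 * k := by
    refine Nat.twoStepInduction (by simpa using h0) (by simp) fun k hk hk1 => ?_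
    have hstep : ((k + 2 : ℕ) : ZMod n) = 2 * ((k + 1 : ℕ) : ZMod n) - k := by push_cast; ring
    rw [hstep, hf, hk, hk1]
    ring
  simpa using hnat x.val

end IsDihedralEnd

def dihedralEndFixingZeroEquiv {n : ℕ} [NeZero n] (a b : ZMod n) :
    {f : ZMod n → ZMod n // IsDihedralEnd n f ∧ f 0 = 0 ∧ f a = b} ≃
      {c : ZMod n // c * a = b} where
  toFun f := ⟨f.1 1, by rw [← f.2.1.eq_mul_apply_one f.2.2.1, f.2.2.2]⟩
  invFun c := ⟨(c.1 * ·), IsDihedralEnd.mul_left c.1, mul_zero _, c.2⟩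
  left_inv f := Subtype.ext <| funext fun x => (f.2.1.eq_mul_apply_one f.2.2.1 x).symm
  right_inv c := Subtype.ext (mul_one _)

theorem card_end_zero_to_zero (n : ℕ) (hn : 1 ≤ n) (a b : ZMod n) :
    Nat.card {f : ZMod n → ZMod n // IsDihedralEnd n f ∧ f 0 = 0 ∧ f a = b} =
      if Nat.gcd a.val n ∣ b.val then Nat.gcd a.val n else 0 := by
  have : NeZero n := ⟨by omega⟩
  rw [Nat.card_congr (dihedralEndFixingZeroEquiv a b), ZMod.natCard_mul_eq]
end

section
/- Let K ≥ 1, let p₁, …, p_K be positive integers, and let a, b be integers. Define the continuants Δ₀ = 1, Δ₁ = p₁, Δ_j = p_j·Δ_{j−1} + Δ_{j−2} for 2 ≤ j ≤ K. Define sequences of integers I_j, J_j, A_j, B_j (1 ≤ j ≤ K) by: A₀ := b; I₁ = a, J₁ = b; I_j = A_{j−2} for 2 ≤ j ≤ K; J₂ = B₁ and J_j = B_{j−1} for 3 ≤ j ≤ K; and A_j = p_j·J_j − (p_j − 1)·I_j, B_j = (p_j + 1)·J_j − p_j·I_j for 1 ≤ j ≤ K. Then for all 1 ≤ j ≤ K: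 A_j = Δ_j·b − (Δ_j − 1)·a and B_j = (Δ_j + Δ_{j−1})·b − (Δ_j + Δ_{j−1} − 1)·a. -/
/-!
The map `x ↦ x * b - (x - 1) * a` is affine, so it commutes with the combinations
`c * J - (c - 1) * I` and `(c + 1) * J - c * I` (coefficients summing to `1`) that define `A_j`
and `B_j`. Writing `I_j` and `J_j` as images of `Δ_{j-2}` and `Δ_{j-1} + Δ_{j-2}`, the two
combinations become `p_j Δ_{j-1} + Δ_{j-2} = Δ_j` and `Δ_j + Δ_{j-1}`. With `Δ_{-1} = 0` the
case `j = 1` is the same computation, since `I_1 = a` and `J_1 = b` are the images of `0` and `1`.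
-/

theorem twist_step_closed_form {a b c u v I J : ℤ}
    (hI : I = v * b - (v - 1) * a) (hJ : J = (u + v) * b - (u + v - 1) * a) :
    c * J - (c - 1) * I = (c * u + v) * b - (c * u + v - 1) * a ∧
      (c + 1) * J - c * I = (c * u + v + u) * b - (c * u + v + u - 1) * a := by
  subst hI hJ
  constructor <;> ring

theorem twist_region_values_general (K : ℕ) (p : ℕ → ℤ)
    (a b : ℤ) (Δ I J A B : ℕ → ℤ)
    (hΔ0 : Δ 0 = 1) (hΔ1 : Δ 1 = p 1)
    (hΔ : ∀ j, 2 ≤ j → j ≤ K → Δ j = p j * Δ (j - 1) + Δ (j - 2))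
    (hA0 : A 0 = b)
    (hI1 : I 1 = a) (hJ1 : J 1 = b)
    (hI : ∀ j, 2 ≤ j → j ≤ K → I j = A (j - 2))
    (hJ : ∀ j, 2 ≤ j → j ≤ K → J j = B (j - 1))
    (hA : ∀ j, 1 ≤ j → j ≤ K → A j = p j * J j - (p j - 1) * I j)
    (hB : ∀ j, 1 ≤ j → j ≤ K → B j = (p j + 1) * J j - p j * I j) :
    ∀ j, 1 ≤ j → j ≤ K →
      A j = Δ j * b - (Δ j - 1) * a ∧
      B j = (Δ j + Δ (j - 1)) * b - (Δ j + Δ (j - 1) - 1) * a := by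
  suffices key : ∀ j, 1 ≤ j → j ≤ K →
      A (j - 1) = Δ (j - 1) * b - (Δ (j - 1) - 1) * a ∧
      A j = Δ j * b - (Δ j - 1) * a ∧
      B j = (Δ j + Δ (j - 1)) * b - (Δ j + Δ (j - 1) - 1) * a from
    fun j hj hjK => (key j hj hjK).2
  intro j hj
  induction j, hj using Nat.le_induction with
  | base =>
    intro h1K
    obtain ⟨hA1, hB1⟩ := twist_step_closed_form (c := p 1)
      (show I 1 = 0 * b - (0 - 1) * a by rw [hI1]; ring)
      (show J 1 = (1 + 0) * b - (1 + 0 - 1) * a by rw [hJ1]; ring)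
    refine ⟨by simp [hA0, hΔ0], ?_, ?_⟩
    · rw [hA 1 le_rfl h1K, hA1, hΔ1]; ring
    · rw [hB 1 le_rfl h1K, hB1, hΔ1, Nat.sub_self, hΔ0]; ring
  | succ j hj ih =>
    intro hjK
    obtain ⟨hAprev, hAj, hBj⟩ := ih (by omega)
    have hIj : I (j + 1) = A (j - 1) := by
      rw [hI (j + 1) (by omega) hjK, show j + 1 - 2 = j - 1 by omega]
    have hΔj : Δ (j + 1) = p (j + 1) * Δ j + Δ (j - 1) := by
      rw [hΔ (j + 1) (by omega) hjK, Nat.add_sub_cancel, show j + 1 - 2 = j - 1 by omega]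
    obtain ⟨hA', hB'⟩ := twist_step_closed_form (c := p (j + 1))
      (hIj.trans hAprev) ((hJ (j + 1) (by omega) hjK).trans (by rw [Nat.add_sub_cancel, hBj]))
    rw [Nat.add_sub_cancel, hA (j + 1) (by omega) hjK, hB (j + 1) (by omega) hjK, hA', hB', hΔj]
    exact ⟨hAj, rfl, rfl⟩

theorem twist_region_values (K : ℕ) (hK : 1 ≤ K) (p : ℕ → ℤ)
    (hp : ∀ j, 1 ≤ j → j ≤ K → 0 < p j)
    (a b : ℤ) (Δ I J A B : ℕ → ℤ)
    (hΔ0 : Δ 0 = 1) (hΔ1 : Δ 1 = p 1)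
    (hΔ : ∀ j, 2 ≤ j → j ≤ K → Δ j = p j * Δ (j - 1) + Δ (j - 2))
    (hA0 : A 0 = b)
    (hI1 : I 1 = a) (hJ1 : J 1 = b)
    (hI : ∀ j, 2 ≤ j → j ≤ K → I j = A (j - 2))
    (hJ : ∀ j, 2 ≤ j → j ≤ K → J j = B (j - 1))
    (hA : ∀ j, 1 ≤ j → j ≤ K → A j = p j * J j - (p j - 1) * I j)
    (hB : ∀ j, 1 ≤ j → j ≤ K → B j = (p j + 1) * J j - p j * I j) :
    ∀ j, 1 ≤ j → j ≤ K →
      A j = Δ j * b - (Δ j - 1) * a ∧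
      B j = (Δ j + Δ (j - 1)) * b - (Δ j + Δ (j - 1) - 1) * a :=
  twist_region_values_general K p a b Δ I J A B hΔ0 hΔ1 hΔ hA0 hI1 hJ1 hI hJ hA hB
end

section
/- Let p be a prime, α ≥ 1, and let j, j' be integers with 0 ≤ j < j' ≤ α. Then there is no quandle automorphism f of the dihedral quandle Z_{p^α}^dih with f(0) = 0 and f(p^j mod p^α) = p^{j'} mod p^α; equivalently, the pairs (0, p^j) and (0, p^{j'}) in (Z/p^αZ)² lie in distinct orbits under the action of the automorphism group of Z_{p^α}^dih acting componentwise on pairs. -/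
namespace IsDihedralEnd

variable {n : ℕ} {f : ZMod n → ZMod n}

theorem map_neg (hf : IsDihedralEnd n f) (x : ZMod n) : f (-x) = 2 * f 0 - f x := by
  simpa using hf x 0

theorem map_natCast (hf : IsDihedralEnd n f) (m : ℕ) :
    f m = f 0 + m * (f 1 - f 0) := by
  induction m using Nat.twoStepInduction with
  | zero => simp
  | one => simp
  | more m ih₀ ih₁ =>
    have step := hf m (m + 1)
    push_cast at ih₁ ⊢
    rw [show (m : ZMod n) + 2 = 2 * (m + 1) - m by ring, step, ih₀, ih₁]
    ring

theorem eq_affine_s8 (hf : IsDihedralEnd n f) (x : ZMod n) :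
    f x = f 0 + x * (f 1 - f 0) := by
  obtain ⟨z, rfl⟩ := ZMod.intCast_surjective x
  obtain ⟨m, rfl | rfl⟩ := Int.eq_nat_or_neg z
  · exact_mod_cast hf.map_natCast m
  · push_cast
    rw [hf.map_neg, hf.map_natCast]
    ring

end IsDihedralEnd

theorem IsDihedralAut.isUnit_map_one_sub_map_zero {n : ℕ} {f : ZMod n → ZMod n}
    (hf : IsDihedralAut n f) : IsUnit (f 1 - f 0) := by
  obtain ⟨z, hz⟩ := hf.2.2 (f 0 + 1)
  rw [hf.1.eq_affine_s8] at hz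
  exact .of_mul_eq_one_right z (add_left_cancel hz)

theorem pow_eq_zero_of_pow_mul_eq_pow {R : Type*} [CommRing R] {x u : R} (hx : IsNilpotent x)
    (hu : IsUnit u) {j j' : ℕ} (hjj' : j < j') (h : x ^ j * u = x ^ j') : x ^ j = 0 := by
  have hunit : IsUnit (u + -x ^ (j' - j)) :=
    (hx.pow_of_pos (by omega)).neg.isUnit_add_left_of_commute hu (Commute.all _ _)
  refine (hunit.mul_left_eq_zero).1 ?_
  rw [mul_add, h, mul_neg, ← pow_add, Nat.add_sub_cancel' hjj'.le, add_neg_cancel]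

theorem ZMod.isNilpotent_natCast_self_pow (p α : ℕ) : IsNilpotent (p : ZMod (p ^ α)) :=
  ⟨α, by rw [← Nat.cast_pow, ZMod.natCast_self]⟩

theorem ZMod.natCast_pow_ne_zero {p α j : ℕ} (hp : 1 < p) (hj : j < α) :
    (p : ZMod (p ^ α)) ^ j ≠ 0 := by
  rw [← Nat.cast_pow, ne_eq, ZMod.natCast_eq_zero_iff, Nat.pow_dvd_pow_iff_le_right hp]
  omega

theorem distinct_orbits_prime_power_general (p : ℕ) (hp : p.Prime) (α : ℕ)
    (j j' : ℕ) (hjj' : j < j') (hj' : j' ≤ α) :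
    ¬ ∃ f : ZMod (p ^ α) → ZMod (p ^ α), IsDihedralAut (p ^ α) f ∧
        f 0 = 0 ∧ f ((p : ZMod (p ^ α)) ^ j) = (p : ZMod (p ^ α)) ^ j' := by
  rintro ⟨f, hf, h0, hfp⟩
  have hunit : IsUnit (f 1) := by simpa [h0] using hf.isUnit_map_one_sub_map_zero
  have hmul : (p : ZMod (p ^ α)) ^ j * f 1 = (p : ZMod (p ^ α)) ^ j' := by
    rw [← hfp, hf.1.eq_affine_s8 (_ ^ j), h0]
    ring
  exact ZMod.natCast_pow_ne_zero hp.one_lt (by omega)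
    (pow_eq_zero_of_pow_mul_eq_pow (ZMod.isNilpotent_natCast_self_pow p α) hunit hjj' hmul)

theorem distinct_orbits_prime_power (p : ℕ) (hp : p.Prime) (α : ℕ) (hα : 1 ≤ α)
    (j j' : ℕ) (hjj' : j < j') (hj' : j' ≤ α) :
    ¬ ∃ f : ZMod (p ^ α) → ZMod (p ^ α), IsDihedralAut (p ^ α) f ∧
        f 0 = 0 ∧ f ((p : ZMod (p ^ α)) ^ j) = (p : ZMod (p ^ α)) ^ j' :=
  distinct_orbits_prime_power_general p hp α j j' hjj' hj'
end

section
/- Let p be a prime, α ≥ 1, and 0 ≤ j ≤ α. The orbit of the pair (0, p^j mod p^α) ∈ (Z/p^αZ)² under the componentwise action of the quandle automorphism group of the dihedral quandle Z_{p^α}^dih, i.e. the set {(f(0), f(p^j)) : f a quandle automorphism of Z_{p^α}^dih}, has cardinality p^{2α−j−1}(p−1) if j < α, and cardinality p^α if j = α. -/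
lemma affine_isDihedralAut {n : ℕ} (a : (ZMod n)ˣ) (b : ZMod n) :
    IsDihedralAut n (fun x => (a : ZMod n) * x + b) := by
  refine ⟨fun x y => by ring, ?_, ?_⟩
  · intro x y h
    simp only [] at h
    have h2 := add_right_cancel h
    exact (Units.mul_right_inj a).mp h2
  · intro y
    refine ⟨(a⁻¹ : (ZMod n)ˣ) * (y - b), ?_⟩
    simp only [Units.mul_inv_cancel_left]
    ring

lemma aut_diff {p α : ℕ} (hp : p.Prime) (hα : 1 ≤ α) (j : ℕ)
    {f : ZMod (p ^ α) → ZMod (p ^ α)} (hf : IsDihedralAut (p ^ α) f) :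
    ∃ u : (ZMod (p ^ α))ˣ, f ((p : ZMod (p ^ α)) ^ j) = f 0 + (p : ZMod (p ^ α)) ^ j * u := by
  haveI : NeZero (p ^ α) := ⟨pow_ne_zero _ hp.pos.ne'⟩
  set g : ZMod (p ^ α) → ZMod (p ^ α) := fun x => f x - f 0 with hg
  have g0 : g 0 = 0 := by simp [hg]
  have hg2 : ∀ x y, g (x + 2 * y) = g x + 2 * g y := by
    intro x y
    have h1 : f (2 * y - -x) = 2 * f y - f (-x) := hf.1 (-x) y
    have h2 : f (2 * 0 - x) = 2 * f 0 - f x := hf.1 x 0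
    rw [sub_neg_eq_add] at h1
    rw [mul_zero, zero_sub] at h2
    show f (x + 2 * y) - f 0 = (f x - f 0) + 2 * (f y - f 0)
    rw [add_comm x (2 * y), h1, h2]
    ring
  have hgsurj : Function.Surjective g := by
    intro y
    obtain ⟨t, ht⟩ := hf.2.2 (y + f 0)
    exact ⟨t, by simp [hg, ht]⟩
  -- in both cases we show g (p^j) = p^j * g 1 and IsUnit (g 1)
  have hcast : ∀ x : ZMod (p ^ α), ((x.val : ℕ) : ZMod (p ^ α)) = x := by
    intro x; rw [ZMod.natCast_val, ZMod.cast_id]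
  suffices h : g ((p : ZMod (p ^ α)) ^ j) = (p : ZMod (p ^ α)) ^ j * g 1 ∧ IsUnit (g 1) by
    obtain ⟨h1, u, hu⟩ := h
    refine ⟨u, ?_⟩
    have : f ((p : ZMod (p ^ α)) ^ j) - f 0 = (p : ZMod (p ^ α)) ^ j * u := by
      rw [hu]; exact h1
    linear_combination this
  have hgdbl : ∀ y, g (2 * y) = 2 * g y := by
    intro y
    have := hg2 0 y
    rwa [zero_add, g0, zero_add] at this
  rcases hp.eq_two_or_odd' with hp2 | hodd
  · -- p = 2
    subst hp2
    have h2cast : ((2 : ℕ) : ZMod (2 ^ α)) = 2 := by norm_cast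
    have not2 : ∀ c : ZMod (2 ^ α), (1 : ZMod (2 ^ α)) ≠ 2 * c := by
      intro c h
      have hu2 : IsUnit (2 : ZMod (2 ^ α)) := IsUnit.of_mul_eq_one c h.symm
      rw [← h2cast, ZMod.isUnit_iff_coprime] at hu2
      exact (Nat.prime_two.coprime_iff_not_dvd.mp hu2) (dvd_pow_self 2 (by omega))
    constructor
    · -- g (2^j) = 2^j * g 1
      have key : ∀ k : ℕ, g ((2 : ZMod (2 ^ α)) ^ k) = (2 : ZMod (2 ^ α)) ^ k * g 1 := by
        intro k
        induction k with
        | zero => simp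
        | succ k ih =>
          rw [pow_succ, mul_comm ((2 : ZMod (2 ^ α)) ^ k) 2, hgdbl, ih]
          ring
      have : ((2 : ℕ) : ZMod (2 ^ α)) ^ j = (2 : ZMod (2 ^ α)) ^ j := by rw [h2cast]
      rw [this]
      exact key j
    · -- IsUnit (g 1)
      obtain ⟨t, ht⟩ := hgsurj 1
      have parity : ∃ y : ZMod (2 ^ α), t = 2 * y ∨ t = 1 + 2 * y := by
        rcases Nat.even_or_odd t.val with ⟨k, hk⟩ | ⟨k, hk⟩
        · exact ⟨(k : ZMod (2 ^ α)), Or.inl (by rw [← hcast t, hk]; push_cast; ring)⟩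
        · exact ⟨(k : ZMod (2 ^ α)), Or.inr (by rw [← hcast t, hk]; push_cast; ring)⟩
      obtain ⟨y, hy | hy⟩ := parity
      · exfalso
        rw [hy, hgdbl] at ht
        exact not2 (g y) ht.symm
      · -- g 1 = 1 - 2 * g y
        have hgy : g 1 + 2 * g y = 1 := by
          rw [hy] at ht; rwa [hg2 1 y] at ht
        have hx : g 1 = 1 - 2 * g y := by linear_combination hgy
        rw [← hcast (g 1), ZMod.isUnit_iff_coprime]
        refine Nat.Coprime.pow_right α (Nat.coprime_comm.mp (Nat.prime_two.coprime_iff_not_dvd.mpr ?_))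
        rintro ⟨k, hk⟩
        have : (g 1 : ZMod (2 ^ α)) = 2 * (k : ZMod (2 ^ α)) := by
          rw [← hcast (g 1), hk]; push_cast; ring
        apply not2 ((k : ZMod (2 ^ α)) + g y)
        linear_combination this - hx
  · -- p odd
    have h2u : IsUnit (2 : ZMod (p ^ α)) := by
      have h2cast : ((2 : ℕ) : ZMod (p ^ α)) = 2 := by norm_cast
      rw [← h2cast, ZMod.isUnit_iff_coprime]
      have hnd : ¬ 2 ∣ p := by rcases hodd with ⟨k, hk⟩; omega
      exact (Nat.prime_two.coprime_iff_not_dvd.mpr hnd).pow_right α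
    obtain ⟨c, hc⟩ := h2u
    have hadd : ∀ x z, g (x + z) = g x + g z := by
      intro x z
      have h2 : (2 : ZMod (p ^ α)) * ((c⁻¹ : (ZMod (p ^ α))ˣ) * z) = z := by
        rw [← hc, Units.mul_inv_cancel_left]
      rw [← h2, hg2, hgdbl]
    have gnat : ∀ m : ℕ, g (m : ZMod (p ^ α)) = (m : ZMod (p ^ α)) * g 1 := by
      intro m
      induction m with
      | zero => simpa using g0
      | succ m ih => push_cast; rw [hadd, ih]; ring
    have gx : ∀ x : ZMod (p ^ α), g x = x * g 1 := by
      intro x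
      conv_lhs => rw [← hcast x]
      rw [gnat, hcast]
    constructor
    · rw [gx]
    · obtain ⟨t, ht⟩ := hgsurj 1
      rw [gx] at ht
      exact IsUnit.of_mul_eq_one t (by rw [mul_comm]; exact ht)

lemma card_V_lt {p α : ℕ} (hp : p.Prime) (j : ℕ) (hjα : j < α) :
    Nat.card {x : ZMod (p ^ α) // ∃ u : (ZMod (p ^ α))ˣ, x = (p : ZMod (p ^ α)) ^ j * u}
      = p ^ (α - j - 1) * (p - 1) := by
  haveI : NeZero (p ^ α) := ⟨pow_ne_zero _ hp.pos.ne'⟩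
  set m := α - j with hm
  have hm1 : 1 ≤ m := by omega
  have hjm : j + m = α := by omega
  haveI : NeZero (p ^ m) := ⟨pow_ne_zero _ hp.pos.ne'⟩
  have hdvd : p ^ m ∣ p ^ α := pow_dvd_pow p (by omega)
  have hpα0 : ((p : ZMod (p ^ α))) ^ α = 0 := by
    rw [← Nat.cast_pow, ZMod.natCast_self]
  -- the bijection from units of ZMod (p^m)
  set φ : (ZMod (p ^ m))ˣ →
      {x : ZMod (p ^ α) // ∃ u : (ZMod (p ^ α))ˣ, x = (p : ZMod (p ^ α)) ^ j * u} :=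
    fun v => ⟨((p ^ j * ((v : ZMod (p ^ m)).val) : ℕ) : ZMod (p ^ α)), by
      have hcop : Nat.Coprime ((v : ZMod (p ^ m)).val) (p ^ α) := by
        refine Nat.Coprime.pow_right α ?_
        exact Nat.Coprime.coprime_dvd_right (dvd_pow_self p (by omega))
          (ZMod.val_coe_unit_coprime v)
      have hU : IsUnit ((((v : ZMod (p ^ m)).val : ℕ)) : ZMod (p ^ α)) :=
        (ZMod.isUnit_iff_coprime _ _).mpr hcop
      obtain ⟨u, hu⟩ := hU
      exact ⟨u, by rw [hu]; push_cast; ring⟩⟩ with hφ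
  have hbij : Function.Bijective φ := by
    constructor
    · intro v v' h
      have h2 := congrArg Subtype.val h
      simp only [hφ] at h2
      set a := ((v : ZMod (p ^ m)).val) with ha
      set b := ((v' : ZMod (p ^ m)).val) with hb
      have hav : a < p ^ m := ZMod.val_lt _
      have hbv : b < p ^ m := ZMod.val_lt _
      have h3 : p ^ j * a < p ^ α := by
        calc p ^ j * a < p ^ j * p ^ m := (mul_lt_mul_iff_right₀ (pow_pos hp.pos j)).mpr hav
          _ = p ^ α := by rw [← pow_add, hjm]
      have h4 : p ^ j * b < p ^ α := by
        calc p ^ j * b < p ^ j * p ^ m := (mul_lt_mul_iff_right₀ (pow_pos hp.pos j)).mpr hbv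
          _ = p ^ α := by rw [← pow_add, hjm]
      have h5 : p ^ j * a = p ^ j * b := by
        have := congrArg ZMod.val h2
        rwa [ZMod.val_cast_of_lt h3, ZMod.val_cast_of_lt h4] at this
      have h6 : a = b := Nat.eq_of_mul_eq_mul_left (pow_pos hp.pos j) h5
      exact Units.ext (ZMod.val_injective _ h6)
    · rintro ⟨x, u, hu⟩
      refine ⟨ZMod.unitsMap hdvd u, ?_⟩
      apply Subtype.ext
      simp only [hφ]
      set a := ((u : ZMod (p ^ α)).val) with ha
      have hcoe : ((ZMod.unitsMap hdvd u : ZMod (p ^ m))) = ((a : ℕ) : ZMod (p ^ m)) := by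
        rw [ZMod.unitsMap_def, Units.coe_map, MonoidHom.coe_coe, ZMod.castHom_apply,
          ← ZMod.natCast_val]
      have hval : ((ZMod.unitsMap hdvd u : ZMod (p ^ m))).val = a % p ^ m := by
        rw [hcoe, ZMod.val_natCast]
      rw [hval, hu]
      have hx : ((a : ℕ) : ZMod (p ^ α)) = ((u : ZMod (p ^ α))) := by
        rw [ha, ZMod.natCast_val, ZMod.cast_id]
      rw [← hx]
      have key : p ^ j * a = p ^ (j + m) * (a / p ^ m) + p ^ j * (a % p ^ m) := by
        conv_lhs => rw [← Nat.div_add_mod a (p ^ m)]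
        ring
      have : ((p ^ j * a : ℕ) : ZMod (p ^ α)) = ((p ^ j * (a % p ^ m) : ℕ) : ZMod (p ^ α)) := by
        rw [key, hjm]
        push_cast
        rw [hpα0]
        ring
      rw [← this]
      push_cast
      ring
  rw [← Nat.card_eq_of_bijective φ hbij, Nat.card_eq_fintype_card,
    ZMod.card_units_eq_totient, Nat.totient_prime_pow hp (by omega)]

theorem orbit_size_prime_power (p : ℕ) (hp : p.Prime) (α : ℕ) (hα : 1 ≤ α)
    (j : ℕ) (hj : j ≤ α) :
    Nat.card {q : ZMod (p ^ α) × ZMod (p ^ α) //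
        ∃ f : ZMod (p ^ α) → ZMod (p ^ α), IsDihedralAut (p ^ α) f ∧
          f 0 = q.1 ∧ f ((p : ZMod (p ^ α)) ^ j) = q.2} =
      if j < α then p ^ (2 * α - j - 1) * (p - 1) else p ^ α := by
  haveI : NeZero (p ^ α) := ⟨pow_ne_zero _ hp.pos.ne'⟩
  have main_iff : ∀ c d : ZMod (p ^ α),
      (∃ f : ZMod (p ^ α) → ZMod (p ^ α), IsDihedralAut (p ^ α) f ∧
        f 0 = c ∧ f ((p : ZMod (p ^ α)) ^ j) = d) ↔
      ∃ u : (ZMod (p ^ α))ˣ, d - c = (p : ZMod (p ^ α)) ^ j * u := by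
    intro c d
    constructor
    · rintro ⟨f, hf, h0, hjf⟩
      obtain ⟨u, hu⟩ := aut_diff hp hα j hf
      exact ⟨u, by rw [← h0, ← hjf, hu]; ring⟩
    · rintro ⟨u, hu⟩
      refine ⟨fun x => (u : ZMod (p ^ α)) * x + c, affine_isDihedralAut u c, by simp, ?_⟩
      simp only []
      linear_combination -hu
  have E : {q : ZMod (p ^ α) × ZMod (p ^ α) //
      ∃ f : ZMod (p ^ α) → ZMod (p ^ α), IsDihedralAut (p ^ α) f ∧
        f 0 = q.1 ∧ f ((p : ZMod (p ^ α)) ^ j) = q.2} ≃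
      (ZMod (p ^ α)) ×
        {x : ZMod (p ^ α) // ∃ u : (ZMod (p ^ α))ˣ, x = (p : ZMod (p ^ α)) ^ j * u} := by
    refine ⟨fun q => (q.1.1, ⟨q.1.2 - q.1.1, (main_iff _ _).mp q.2⟩),
      fun z => ⟨(z.1, z.1 + z.2.1), (main_iff _ _).mpr ?_⟩, ?_, ?_⟩
    · obtain ⟨u, hu⟩ := z.2.2
      exact ⟨u, by rw [add_sub_cancel_left, hu]⟩
    · rintro ⟨⟨c, d⟩, hq⟩
      apply Subtype.ext
      simp
    · rintro ⟨c, x, hx⟩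
      simp
  rw [Nat.card_congr E, Nat.card_prod, Nat.card_zmod]
  by_cases hlt : j < α
  · rw [if_pos hlt, card_V_lt hp j hlt, ← mul_assoc, ← pow_add]
    have he : α + (α - j - 1) = 2 * α - j - 1 := by omega
    rw [he]
  · rw [if_neg hlt]
    have hje : j = α := by omega
    subst hje
    have hpα0 : ((p : ZMod (p ^ j))) ^ j = 0 := by
      rw [← Nat.cast_pow, ZMod.natCast_self]
    have h1 : Nat.card {x : ZMod (p ^ j) // ∃ u : (ZMod (p ^ j))ˣ, x = (p : ZMod (p ^ j)) ^ j * u}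
        = 1 := by
      rw [Nat.card_eq_one_iff_unique]
      constructor
      · constructor
        rintro ⟨x, u, hu⟩ ⟨y, v, hv⟩
        apply Subtype.ext
        show x = y
        rw [hu, hv, hpα0, zero_mul, zero_mul]
      · exact ⟨⟨0, 1, by rw [hpα0, zero_mul]⟩⟩
    rw [h1, mul_one]
end

section
/- Let n ≥ 1 and let d be a positive divisor of n. The orbit of the pair (0, d mod n) ∈ (Z/nZ)² under the componentwise action of the quandle automorphism group of the dihedral quandle Z_n^dih has cardinality ∏_p n_p, where the product is over all prime divisors p of n, and n_p = p^{ν_p(n)} if ν_p(d) = ν_p(n), while n_p = p^{2ν_p(n) − ν_p(d) − 1}(p − 1) if ν_p(d) < ν_p(n); here ν_p denotes the p-adic valuation. -/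
lemma endo_affine {n : ℕ} [NeZero n] {f : ZMod n → ZMod n} (hf : IsDihedralEnd n f) :
    ∀ x, f x = (f 1 - f 0) * x + f 0 := by
  set a := f 1 - f 0 with ha
  have step : ∀ x : ZMod n, f (x + 2) = 2 * f (x + 1) - f x := by
    intro x
    have h := hf x (x + 1)
    rw [show 2 * (x + 1) - x = x + 2 by ring] at h
    exact h
  have diff : ∀ k : ℕ, f ((k : ZMod n) + 1) = f (k : ZMod n) + a := by
    intro k
    induction k with
    | zero => simp [ha]
    | succ k ih =>
      have h2 := step (k : ZMod n)
      push_cast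
      rw [show (k : ZMod n) + 1 + 1 = (k : ZMod n) + 2 by ring, h2, ih]
      ring
  have key : ∀ k : ℕ, f (k : ZMod n) = a * k + f 0 := by
    intro k
    induction k with
    | zero => simp
    | succ k ih =>
      push_cast
      rw [diff k, ih]
      ring
  intro x
  have := key x.val
  rwa [ZMod.natCast_val, ZMod.cast_id] at this

lemma aut_iff {n : ℕ} [NeZero n] {f : ZMod n → ZMod n} :
    IsDihedralAut n f ↔ ∃ a b : ZMod n, IsUnit a ∧ f = fun x => a * x + b := by
  constructor
  · rintro ⟨he, hb⟩
    refine ⟨f 1 - f 0, f 0, ?_, funext (endo_affine he)⟩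
    obtain ⟨x, hx⟩ := hb.2 (1 + f 0)
    have h1 := endo_affine he x
    rw [hx] at h1
    have : (f 1 - f 0) * x = 1 := by linear_combination -h1
    exact IsUnit.of_mul_eq_one _ this
  · rintro ⟨a, b, ha, rfl⟩
    obtain ⟨u, rfl⟩ := ha
    constructor
    · intro x y; ring
    · have : (fun x : ZMod n => (u : ZMod n) * x + b) =
          (fun x => x + b) ∘ (fun x => (u : ZMod n) * x) := rfl
      rw [this]
      exact (Equiv.addRight b).bijective.comp (Units.mulLeft u).bijective

lemma card_unit_mul (n d : ℕ) (hn : n ≠ 0) (hd : 0 < d) (hdn : d ∣ n) :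
    haveI : NeZero n := ⟨hn⟩
    Nat.card (Set.range (fun u : (ZMod n)ˣ => (u : ZMod n) * (d : ZMod n))) =
      Nat.totient (n / d) := by
  haveI : NeZero n := ⟨hn⟩
  set m := n / d with hm
  have hdm : d * m = n := Nat.mul_div_cancel' hdn
  have hm0 : m ≠ 0 := by
    rintro h; rw [h, mul_zero] at hdm; exact hn hdm.symm
  haveI : NeZero m := ⟨hm0⟩
  have hmn : m ∣ n := Nat.div_dvd_of_dvd hdn
  set ψ : (ZMod m)ˣ → ZMod n := fun v => (d : ZMod n) * (((v : ZMod m).val : ℕ) : ZMod n)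
    with hψ
  have hcomp : ∀ u : (ZMod n)ˣ, ψ (ZMod.unitsMap hmn u) = (u : ZMod n) * (d : ZMod n) := by
    intro u
    have hcast : ((ZMod.unitsMap hmn u : ZMod m)) = (((u : ZMod n).val : ℕ) : ZMod m) := by
      rw [ZMod.unitsMap_def, Units.coe_map]
      simp [ZMod.castHom_apply, ← ZMod.natCast_val]
    rw [hψ]
    simp only [hcast, ZMod.val_natCast]
    have hmodeq : d * ((u : ZMod n).val % m) ≡ d * (u : ZMod n).val [MOD n] := by
      have := Nat.ModEq.mul_left' d (Nat.mod_modEq ((u : ZMod n).val) m)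
      rwa [hdm] at this
    have := (ZMod.natCast_eq_natCast_iff _ _ _).mpr hmodeq
    push_cast at this
    rw [this, ZMod.natCast_val, ZMod.cast_id]
    ring
  have hinj : Function.Injective ψ := by
    intro v w hvw
    have hv : (v : ZMod m).val < m := ZMod.val_lt _
    have hw : (w : ZMod m).val < m := ZMod.val_lt _
    rw [hψ] at hvw
    simp only at hvw
    have : (↑(d * (v : ZMod m).val) : ZMod n) = ↑(d * (w : ZMod m).val) := by
      push_cast; linear_combination hvw
    rw [ZMod.natCast_eq_natCast_iff] at this
    have hdvd : (n : ℤ) ∣ (d * (w : ZMod m).val : ℕ) - (d * (v : ZMod m).val : ℕ) :=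
      Nat.modEq_iff_dvd.mp this
    have : (m : ℤ) ∣ ((w : ZMod m).val : ℤ) - ((v : ZMod m).val : ℤ) := by
      rw [← hdm] at hdvd
      push_cast at hdvd
      rw [← mul_sub] at hdvd
      rw [mul_comm (d:ℤ) (m:ℤ)] at hdvd
      exact (mul_dvd_mul_iff_left (by exact_mod_cast hd.ne' : (d:ℤ) ≠ 0)).mp
        (by rwa [mul_comm (m:ℤ) (d:ℤ)] at hdvd)
    have hsub : ((w : ZMod m).val : ℤ) - ((v : ZMod m).val : ℤ) = 0 := by
      refine Int.eq_zero_of_abs_lt_dvd this ?_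
      rw [abs_sub_lt_iff]
      constructor <;> omega
    have hval : (v : ZMod m).val = (w : ZMod m).val := by omega
    exact Units.ext (ZMod.val_injective _ hval)
  have heq : (fun u : (ZMod n)ˣ => (u : ZMod n) * (d : ZMod n)) = ψ ∘ (ZMod.unitsMap hmn) := by
    funext u
    exact (hcomp u).symm
  rw [heq, Set.range_comp, Set.range_eq_univ.mpr (ZMod.unitsMap_surjective hmn),
    Set.image_univ, Nat.card_range_of_injective hinj, Nat.card_eq_fintype_card,
    ZMod.card_units_eq_totient]

lemma arith_id (n d : ℕ) (hn : n ≠ 0) (hd : d ≠ 0) (hdn : d ∣ n) :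
    n * Nat.totient (n / d) =
      ∏ p ∈ n.primeFactors,
        (if (d.factorization p) = (n.factorization p) then p ^ (n.factorization p)
         else p ^ (2 * n.factorization p - d.factorization p - 1) * (p - 1)) := by
  set m := n / d with hm
  have hdm : d * m = n := Nat.mul_div_cancel' hdn
  have hm0 : m ≠ 0 := by rintro h; rw [h, mul_zero] at hdm; exact hn hdm.symm
  have hmn : m ∣ n := Nat.div_dvd_of_dvd hdn
  have hfac : ∀ p : ℕ, m.factorization p = n.factorization p - d.factorization p := by
    intro p
    rw [hm, Nat.factorization_div hdn]
    simp
  have hle : ∀ p : ℕ, d.factorization p ≤ n.factorization p := by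
    intro p
    exact ((Nat.factorization_le_iff_dvd hd hn).mpr hdn) p
  have hnprod : n = ∏ p ∈ n.primeFactors, p ^ n.factorization p := by
    conv_lhs => rw [← Nat.factorization_prod_pow_eq_self hn]
    rw [Finsupp.prod, Nat.support_factorization]
  have hsub : m.primeFactors ⊆ n.primeFactors := Nat.primeFactors_mono hmn hn
  have htot : Nat.totient m = ∏ p ∈ n.primeFactors,
      (if d.factorization p = n.factorization p then 1
       else p ^ (n.factorization p - d.factorization p - 1) * (p - 1)) := by
    rw [Nat.totient_eq_prod_factorization hm0, Finsupp.prod, Nat.support_factorization]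
    rw [← Finset.prod_subset hsub (fun p hp hnp => ?_)]
    · apply Finset.prod_congr rfl
      intro p hp
      have hne : m.factorization p ≠ 0 := by
        rw [← Nat.support_factorization, Finsupp.mem_support_iff] at hp
        exact hp
      have hcase : d.factorization p ≠ n.factorization p := by
        have := hfac p
        omega
      rw [if_neg hcase, hfac p]
    · have h0 : m.factorization p = 0 := by
        rw [← Nat.support_factorization, Finsupp.mem_support_iff] at hnp
        push_neg at hnp
        exact hnp
      have heq : d.factorization p = n.factorization p := by
        have := hfac p
        have := hle p
        omega
      rw [if_pos heq]
  rw [htot]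
  nth_rewrite 1 [hnprod]
  rw [← Finset.prod_mul_distrib]
  · apply Finset.prod_congr rfl
    intro p hp
    by_cases hcase : d.factorization p = n.factorization p
    · rw [if_pos hcase, if_pos hcase, mul_one]
    · rw [if_neg hcase, if_neg hcase]
      have hlt : d.factorization p < n.factorization p := lt_of_le_of_ne (hle p) hcase
      rw [← mul_assoc, ← pow_add]
      congr 2
      omega

theorem orbit_size_general (n : ℕ) (hn : 1 ≤ n) (d : ℕ) (hd : 0 < d) (hdn : d ∣ n) :
    Nat.card {q : ZMod n × ZMod n //
        ∃ f : ZMod n → ZMod n, IsDihedralAut n f ∧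
          f 0 = q.1 ∧ f (d : ZMod n) = q.2} =
      ∏ p ∈ n.primeFactors,
        (if (d.factorization p) = (n.factorization p) then p ^ (n.factorization p)
         else p ^ (2 * n.factorization p - d.factorization p - 1) * (p - 1)) := by
  have hn0 : n ≠ 0 := by omega
  haveI : NeZero n := ⟨hn0⟩
  set S : Set (ZMod n) := Set.range (fun u : (ZMod n)ˣ => (u : ZMod n) * (d : ZMod n))
    with hS
  have E : {q : ZMod n × ZMod n //
      ∃ f : ZMod n → ZMod n, IsDihedralAut n f ∧
        f 0 = q.1 ∧ f (d : ZMod n) = q.2} ≃ ZMod n × S := by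
    refine ⟨fun q => ⟨q.1.1, ⟨q.1.2 - q.1.1, ?_⟩⟩,
      fun p => ⟨(p.1, p.2.1 + p.1), ?_⟩, ?_, ?_⟩
    · obtain ⟨f, haut, h0, hd'⟩ := q.2
      obtain ⟨a, b, ha, rfl⟩ := aut_iff.mp haut
      obtain ⟨u, rfl⟩ := ha
      simp only at h0 hd'
      refine ⟨u, ?_⟩
      simp only
      rw [← hd', ← h0]
      ring
    · obtain ⟨u, hu⟩ := p.2.2
      refine ⟨fun x => (u : ZMod n) * x + p.1,
        aut_iff.mpr ⟨u, p.1, u.isUnit, rfl⟩, by simp, ?_⟩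
      simp only
      rw [show ((u : ZMod n) * (d : ZMod n)) = (p.2 : ZMod n) from hu]
    · intro q
      ext <;> simp
    · intro p
      ext <;> simp
  rw [Nat.card_congr E, Nat.card_prod, Nat.card_zmod, hS]
  rw [show Nat.card ↑(Set.range (fun u : (ZMod n)ˣ => (u : ZMod n) * (d : ZMod n))) =
      Nat.totient (n / d) from card_unit_mul n d hn0 hd hdn]
  exact arith_id n d hn0 (by omega) hdn
end

section
/- Let n ≥ 1 and N ≥ 1 be integers and set g = gcd(N, n). Then for every pair (a, b) ∈ (Z/nZ)² with N·(b − a) ≡ 0 (mod n), there exists a unique positive divisor d of n with (n/g) ∣ d such that (a, b) lies in the orbit of (0, d mod n), i.e. such that there is a quandle automorphism f of the dihedral quandle Z_n^dih with f(0) = a and f(d) = b. -/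
/-- Any dihedral endomorphism is "affine on cyclic subgroups":
`f (m*x) = m*(f x - f 0) + f 0`. -/
lemma dihedralEnd_mul (n : ℕ) (f : ZMod n → ZMod n) (hf : IsDihedralEnd n f) (x : ZMod n) :
    ∀ m : ℤ, f ((m : ZMod n) * x) = (m : ZMod n) * (f x - f 0) + f 0 := by
  have H : ∀ m : ℤ, f ((m : ZMod n) * x) = (m : ZMod n) * (f x - f 0) + f 0 ∧
      f (((m + 1 : ℤ) : ZMod n) * x) = ((m + 1 : ℤ) : ZMod n) * (f x - f 0) + f 0 := by
    intro m
    induction m using Int.induction_on with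
    | zero => constructor <;> push_cast <;> ring_nf
    | succ k ih =>
      refine ⟨ih.2, ?_⟩
      have h2 : ((k + 1 + 1 : ℤ) : ZMod n) * x =
          2 * (((k + 1 : ℤ) : ZMod n) * x) - ((k : ℤ) : ZMod n) * x := by push_cast; ring
      rw [h2, hf, ih.2, ih.1]
      push_cast; ring
    | pred k ih =>
      have ecast : ((-(k:ℤ) - 1 + 1 : ℤ) : ZMod n) = ((-(k:ℤ) : ℤ) : ZMod n) := by push_cast; ring
      refine ⟨?_, by rw [ecast]; exact ih.1⟩
      have h2 : ((-k - 1 : ℤ) : ZMod n) * x =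
          2 * (((-k : ℤ) : ZMod n) * x) - (((-k + 1 : ℤ) : ZMod n) * x) := by push_cast; ring
      rw [h2, hf]
      have e1 : ((-(k:ℤ) + 1 : ℤ) : ZMod n) = ((-(k:ℤ) : ℤ) + 1 : ℤ) := by push_cast; ring
      rw [e1] at ih ⊢
      rw [ih.1, ih.2]
      push_cast; ring
  exact fun m => (H m).1

/-- The additive order of `f x - f 0` equals that of `x` for any dihedral automorphism. -/
lemma dihedralAut_addOrderOf (n : ℕ) (f : ZMod n → ZMod n) (hf : IsDihedralAut n f)
    (x : ZMod n) : addOrderOf (f x - f 0) = addOrderOf x := by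
  rw [addOrderOf_eq_addOrderOf_iff]
  intro m
  have h := dihedralEnd_mul n f hf.1 x (m : ℤ)
  push_cast at h
  have hmul : (m : ZMod n) * (f x - f 0) = f ((m : ZMod n) * x) - f 0 := by
    rw [h]; ring
  rw [nsmul_eq_mul, nsmul_eq_mul, hmul, sub_eq_zero, hf.2.1.eq_iff]

theorem orbit_representatives_general (n N : ℕ) (hn : 1 ≤ n) (hN : 1 ≤ N)
    (g : ℕ) (hg : g = Nat.gcd N n) :
    ∀ a b : ZMod n, (N : ZMod n) * (b - a) = 0 →
      ∃! d : ℕ, (0 < d ∧ d ∣ n ∧ (n / g) ∣ d) ∧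
        ∃ f : ZMod n → ZMod n, IsDihedralAut n f ∧
          f 0 = a ∧ f (d : ZMod n) = b := by
  intro a b hab
  have hn0 : n ≠ 0 := by omega
  haveI : NeZero n := ⟨hn0⟩
  set t : ℕ := (b - a).val with ht_def
  have ht : (t : ZMod n) = b - a := by
    simp [ht_def, ZMod.natCast_val, ZMod.cast_id]
  -- n ∣ N * t
  have hNt : n ∣ N * t := by
    have : ((N * t : ℕ) : ZMod n) = 0 := by push_cast; rw [ht]; exact hab
    exact (ZMod.natCast_eq_zero_iff _ _).mp this
  set d : ℕ := n.gcd t with hd_def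
  have hdpos : 0 < d := Nat.gcd_pos_of_pos_left _ (by omega)
  have hdn : d ∣ n := Nat.gcd_dvd_left _ _
  have hdt : d ∣ t := Nat.gcd_dvd_right _ _
  have hgpos : 0 < g := by rw [hg]; exact Nat.gcd_pos_of_pos_left _ (by omega)
  have hgN : g ∣ N := hg ▸ Nat.gcd_dvd_left _ _
  have hgn : g ∣ n := hg ▸ Nat.gcd_dvd_right _ _
  -- (n / g) ∣ d
  have hngd : (n / g) ∣ d := by
    have hcop : Nat.Coprime (N / g) (n / g) := by
      rw [hg]; exact Nat.coprime_div_gcd_div_gcd (hg ▸ hgpos)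
    have h1 : g * (n / g) ∣ (g * (N / g)) * t := by
      rw [Nat.mul_div_cancel' hgn, Nat.mul_div_cancel' hgN]; exact hNt
    have h2 : (n / g) ∣ (N / g) * t := by
      rw [mul_assoc] at h1
      exact (mul_dvd_mul_iff_left (by omega : g ≠ 0)).mp h1
    have h3 : (n / g) ∣ t := (Nat.Coprime.dvd_of_dvd_mul_left hcop.symm h2)
    exact Nat.dvd_gcd (Nat.div_dvd_of_dvd hgn) h3
  -- construct the automorphism
  set e : ℕ := n / d with he_def
  have hen : e ∣ n := Nat.div_dvd_of_dvd hdn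
  have hde : d * e = n := Nat.mul_div_cancel' hdn
  set t' : ℕ := t / d with ht'_def
  have hdt' : d * t' = t := Nat.mul_div_cancel' hdt
  have hcop' : Nat.Coprime t' e := by
    have := Nat.coprime_div_gcd_div_gcd (m := n) (n := t) hdpos
    exact this.symm
  obtain ⟨u, hu⟩ := ZMod.unitsMap_surjective hen (ZMod.unitOfCoprime t' hcop')
  set U : ZMod n := (u : ZMod n) with hU_def
  have hcast : ((U.val : ℕ) : ZMod e) = (t' : ZMod e) := by
    have h1 : (ZMod.castHom hen (ZMod e)) U = (t' : ZMod e) := by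
      have := congrArg (Units.val) hu
      simpa [ZMod.unitsMap_def, ZMod.coe_unitOfCoprime] using this
    rw [← h1]
    simp [ZMod.castHom_apply, ZMod.natCast_val]
  have hmodeq : U.val ≡ t' [MOD e] := (ZMod.natCast_eq_natCast_iff _ _ _).mp hcast
  have hmodeq2 : d * U.val ≡ t [MOD n] := by
    have := Nat.ModEq.mul_left' (c := d) hmodeq
    rw [hde, hdt'] at this
    exact this
  have hUd : U * (d : ZMod n) = (t : ZMod n) := by
    have h1 : ((d * U.val : ℕ) : ZMod n) = (t : ZMod n) :=
      (ZMod.natCast_eq_natCast_iff _ _ _).mpr hmodeq2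
    push_cast at h1
    rw [ZMod.natCast_val, ZMod.cast_id] at h1
    rw [mul_comm]; exact h1
  refine ⟨d, ⟨⟨hdpos, hdn, hngd⟩, fun x => U * x + a, ⟨?_, ?_⟩, by simp, ?_⟩, ?_⟩
  · intro x y; ring
  · refine Function.bijective_iff_has_inverse.mpr
      ⟨fun y => ((u⁻¹ : (ZMod n)ˣ) : ZMod n) * (y - a), fun x => ?_, fun y => ?_⟩
    · simp only [add_sub_cancel_right, ← mul_assoc, ← hU_def]
      rw [← Units.val_mul, inv_mul_cancel, Units.val_one, one_mul]
    · simp only [← mul_assoc, ← hU_def]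
      rw [← Units.val_mul, mul_inv_cancel, Units.val_one, one_mul, sub_add_cancel]
  · show U * (d : ZMod n) + a = b
    rw [hUd, ht, sub_add_cancel]
  · -- uniqueness
    rintro d1 ⟨⟨hd1pos, hd1n, -⟩, f1, hf1, h10, h1d⟩
    have ho1 : addOrderOf (b - a) = addOrderOf ((d1 : ℕ) : ZMod n) := by
      rw [← h10, ← h1d]
      exact dihedralAut_addOrderOf n f1 hf1 _
    have ho2 : addOrderOf (b - a) = n / d := by
      rw [← ht, ZMod.addOrderOf_coe t hn0, hd_def]
    have ho3 : addOrderOf ((d1 : ℕ) : ZMod n) = n / d1 := by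
      rw [ZMod.addOrderOf_coe d1 hn0, Nat.gcd_eq_right hd1n]
    have hdd : n / d1 = n / d := by rw [← ho3, ← ho1, ho2]
    calc d1 = n / (n / d1) := (Nat.div_div_self hd1n hn0).symm
      _ = n / (n / d) := by rw [hdd]
      _ = d := Nat.div_div_self hdn hn0
end

section
/- Let n ≥ 1 and let d be a positive divisor of n. The number of units u of Z/nZ satisfying u·d ≡ d (mod n) equals ∏_p m_p, where the product is over all prime divisors p of n, and m_p = φ(p^{ν_p(n)}) if ν_p(d) = ν_p(n), while m_p = p^{ν_p(d)} if ν_p(d) < ν_p(n); here ν_p denotes the p-adic valuation and φ is Euler's totient function. -/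
/-!
Write `n = m * d`. A unit `u` of `ℤ/n` fixes `d` exactly when `(u - 1) * d ≡ 0 mod m * d`, i.e. when
`u ≡ 1 mod m`, so the stabilizer is the kernel of the surjective reduction `(ℤ/n)ˣ → (ℤ/m)ˣ` and has
`φ(n) / φ(n / d)` elements. Comparing `φ(n)` and `φ(n / d)` prime by prime gives the product formula.
-/

open Nat

namespace ZMod

theorem mul_natCast_eq_zero_iff {m d n : ℕ} (h : m * d = n) (hd : d ≠ 0) (x : ZMod n) :
    x * d = 0 ↔ castHom (Dvd.intro d h) (ZMod m) x = 0 := by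
  subst h
  obtain ⟨k, rfl⟩ := intCast_surjective x
  rw [map_intCast, ← Int.cast_natCast (R := ZMod (m * d)) d, ← Int.cast_mul,
    intCast_zmod_eq_zero_iff_dvd, intCast_zmod_eq_zero_iff_dvd, Nat.cast_mul,
    mul_dvd_mul_iff_right (Int.natCast_ne_zero.mpr hd)]

theorem unitsMap_eq_one_iff {m d n : ℕ} (h : m * d = n) (hd : d ≠ 0) (u : (ZMod n)ˣ) :
    unitsMap (Dvd.intro d h) u = 1 ↔ (u : ZMod n) * d = d := by
  have hfix := mul_natCast_eq_zero_iff h hd ((u : ZMod n) - 1)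
  rw [sub_mul, one_mul, sub_eq_zero, map_sub, map_one, sub_eq_zero] at hfix
  rw [hfix, Units.ext_iff, unitsMap_def, Units.coe_map, Units.val_one]
  rfl

theorem totient_mul_card_ker_unitsMap {m n : ℕ} [NeZero n] (h : m ∣ n) :
    φ m * Nat.card (unitsMap h).ker = φ n := by
  have : NeZero m := ⟨ne_zero_of_dvd_ne_zero (NeZero.ne n) h⟩
  have hrange : (unitsMap h).range = ⊤ := MonoidHom.range_eq_top.mpr (unitsMap_surjective h)
  rw [← card_units_eq_totient, ← card_units_eq_totient, ← Nat.card_eq_fintype_card,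
    ← Nat.card_eq_fintype_card, ← (unitsMap h).ker.index_mul_card, Subgroup.index_ker, hrange,
    Subgroup.card_top (G := (ZMod m)ˣ)]

end ZMod

namespace Nat

theorem totient_eq_prod_totient_pow_factorization {n : ℕ} (hn : n ≠ 0) {s : Finset ℕ}
    (hs : n.primeFactors ⊆ s) : φ n = ∏ p ∈ s, φ (p ^ n.factorization p) := by
  rw [multiplicative_factorization φ (fun _ _ => totient_mul) totient_one hn]
  exact Finsupp.prod_of_support_subset _ (by simpa using hs) _ (by simp)

theorem totient_prime_pow_sub_mul {p a k : ℕ} (hp : p.Prime) (hak : a ≤ k) :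
    φ (p ^ (k - a)) * (if a = k then φ (p ^ k) else p ^ a) = φ (p ^ k) := by
  split_ifs with h
  · simp [h]
  · rw [totient_prime_pow hp (by omega), totient_prime_pow hp (by omega), mul_right_comm,
      ← pow_add]
    congr 2
    omega

theorem totient_div_mul_prod_eq_totient {n d : ℕ} (hn : n ≠ 0) (hdn : d ∣ n) :
    φ (n / d) * ∏ p ∈ n.primeFactors,
      (if d.factorization p = n.factorization p then φ (p ^ n.factorization p)
       else p ^ d.factorization p) = φ n := by
  have hd : d ≠ 0 := ne_zero_of_dvd_ne_zero hn hdn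
  rw [totient_eq_prod_totient_pow_factorization (Nat.div_ne_zero_iff_of_dvd hdn |>.mpr ⟨hn, hd⟩)
      (primeFactors_mono (div_dvd_of_dvd hdn) hn),
    totient_eq_prod_totient_pow_factorization hn subset_rfl, ← Finset.prod_mul_distrib]
  refine Finset.prod_congr rfl fun p hp => ?_
  rw [factorization_div hdn, Finsupp.tsub_apply]
  exact totient_prime_pow_sub_mul (prime_of_mem_primeFactors hp)
    ((factorization_le_iff_dvd hd hn).mpr hdn p)

end Nat

theorem stabilizer_size_general_general (n : ℕ) (hn : 1 ≤ n) (d : ℕ) (hdn : d ∣ n) :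
    Nat.card {u : (ZMod n)ˣ // (u : ZMod n) * (d : ZMod n) = (d : ZMod n)} =
      ∏ p ∈ n.primeFactors,
        (if d.factorization p = n.factorization p then Nat.totient (p ^ (n.factorization p))
         else p ^ (d.factorization p)) := by
  have hn0 : n ≠ 0 := Nat.one_le_iff_ne_zero.mp hn
  have : NeZero n := ⟨hn0⟩
  have hd0 : d ≠ 0 := ne_zero_of_dvd_ne_zero hn0 hdn
  have hmd : n / d * d = n := Nat.div_mul_cancel hdn
  have hker : Nat.card {u : (ZMod n)ˣ // (u : ZMod n) * (d : ZMod n) = (d : ZMod n)} =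
      Nat.card (ZMod.unitsMap (Dvd.intro d hmd)).ker :=
    Nat.card_congr (Equiv.subtypeEquivRight fun u => (ZMod.unitsMap_eq_one_iff hmd hd0 u).symm)
  have hφ : 0 < φ (n / d) :=
    Nat.totient_pos.mpr (Nat.div_pos (Nat.le_of_dvd (by omega) hdn) (Nat.pos_of_ne_zero hd0))
  rw [hker]
  exact Nat.eq_of_mul_eq_mul_left hφ ((ZMod.totient_mul_card_ker_unitsMap _).trans
    (Nat.totient_div_mul_prod_eq_totient hn0 hdn).symm)

theorem stabilizer_size_general (n : ℕ) (hn : 1 ≤ n) (d : ℕ) (hd : 0 < d) (hdn : d ∣ n) :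
    Nat.card {u : (ZMod n)ˣ // (u : ZMod n) * (d : ZMod n) = (d : ZMod n)} =
      ∏ p ∈ n.primeFactors,
        (if d.factorization p = n.factorization p then Nat.totient (p ^ (n.factorization p))
         else p ^ (d.factorization p)) :=
  stabilizer_size_general_general n hn d hdn
end
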